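/- Let α be an irrational real number with 0 < α < 1/2, let k ≥ 0, and let s be the singular factor of length q_k. If w is a factor of slope α that does not have abelian period q_k, then s occurs in w at least q_k times, i.e., there are at least q_k distinct indices i with 0 ≤ i ≤ |w| − q_k such that w restricted to positions i, …, i + q_k − 1 equals s. -/

import Mathlib

open scoped Classical

noncomputable section

namespace SturmianAbelian

/-- Complete quotients: `cq α t = α_t` for `t ≥ 1`; `cq α 0 = α` is a dummy value chosen so that
`cq α 1 = 1/(α - ⌊α⌋) = 1/α` when `0 < α < 1`. -/
noncomputable def cq (α : ℝ) : ℕ → ℝ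
  | 0 => α
  | t + 1 => (cq α t - ⌊cq α t⌋)⁻¹

/-- Partial quotients: `pq α t = a_t = ⌊α_t⌋` for `t ≥ 1`. -/
noncomputable def pq (α : ℝ) (t : ℕ) : ℕ := (⌊cq α t⌋).toNat

/-- Denominators of the convergents of `α`: `qd α k = q_k`, with
`q_0 = 1`, `q_1 = a_1`, `q_k = a_k q_{k-1} + q_{k-2}`. -/
noncomputable def qd (α : ℝ) : ℕ → ℕ
  | 0 => 1
  | 1 => pq α 1
  | (k + 2) => pq α (k + 2) * qd α (k + 1) + qd α k

/-- Distance from `x` to the nearest integer, `‖x‖`. -/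
noncomputable def nint (x : ℝ) : ℝ := min (Int.fract x) (1 - Int.fract x)

/-- The representative of `x` modulo 1 lying in `(0, 1]`. -/
noncomputable def fract' (x : ℝ) : ℝ := 1 - Int.fract (-x)

/-- The Sturmian word of slope `α` and intercept `ρ` in the lower convention:
`s n = 1` iff the fractional part of `ρ + nα` lies in `[1 - α, 1)`. -/
noncomputable def lowerWord (α ρ : ℝ) (n : ℕ) : Bool :=
  if 1 - α ≤ Int.fract (ρ + (n : ℝ) * α) then true else false

/-- The Sturmian word of slope `α` and intercept `ρ` in the upper convention:
`s n = 1` iff the representative of `ρ + nα` modulo 1 in `(0,1]` lies in `(1 - α, 1]`. -/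
noncomputable def upperWord (α ρ : ℝ) (n : ℕ) : Bool :=
  if 1 - α < fract' (ρ + (n : ℝ) * α) then true else false

/-- `s` is a Sturmian word of slope `α` (either convention, some intercept `ρ ∈ [0,1)`). -/
def IsSturmian (α : ℝ) (s : ℕ → Bool) : Prop :=
  ∃ ρ : ℝ, 0 ≤ ρ ∧ ρ < 1 ∧ (s = lowerWord α ρ ∨ s = upperWord α ρ)

/-- `w` is a (finite, contiguous) factor of the infinite word `s`. -/
def FactorOf (s : ℕ → Bool) (w : List Bool) : Prop :=
  ∃ i : ℕ, w = (List.range w.length).map fun j => s (i + j)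

/-- `w` is a factor of slope `α`. -/
def IsFactor (α : ℝ) (w : List Bool) : Prop :=
  ∃ s : ℕ → Bool, IsSturmian α s ∧ FactorOf s w

/-- Abelian equivalence: same length and the same number of occurrences of the letter 1. -/
def AbEq (u v : List Bool) : Prop :=
  u.length = v.length ∧ u.count true = v.count true

/-- `u` is an abelian power of period `m` and exponent `e`: a concatenation of `e ≥ 2` pairwise
abelian equivalent blocks, each of length `m ≥ 1`. -/
def IsAbelianPower (m e : ℕ) (u : List Bool) : Prop :=
  1 ≤ m ∧ 2 ≤ e ∧ u.length = e * m ∧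
  ∀ i < e, ∀ j < e, AbEq ((u.drop (i * m)).take m) ((u.drop (j * m)).take m)

/-- `w` has abelian period `m`: `w` is a contiguous factor of some abelian power of period `m`. -/
def HasAbPeriod (w : List Bool) (m : ℕ) : Prop :=
  ∃ e u, IsAbelianPower m e u ∧ w <:+: u

/-- `m` is the minimum abelian period of `w`. -/
def MinAbPeriod (w : List Bool) (m : ℕ) : Prop :=
  IsLeast {p : ℕ | HasAbPeriod w p} m

/-- `M(α) = {t·q_k : k ≥ 0, 1 ≤ t ≤ a_{k+1}}`. -/
def Mset (α : ℝ) : Set ℕ :=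
  {m | ∃ k t : ℕ, 1 ≤ t ∧ t ≤ pq α (k + 1) ∧ m = t * qd α k}

/-- The set of denominators of convergents and semiconvergents of `α`. -/
def Qsc (α : ℝ) : Set ℕ :=
  {m | (∃ k : ℕ, m = qd α k) ∨
    ∃ k l : ℕ, 1 ≤ k ∧ 1 ≤ l ∧ l < pq α (k + 1) ∧ m = l * qd α k + qd α (k - 1)}

/-- The singular factor of length `q_k`: the unique factor of slope `α` of length `q_k` that is not
abelian equivalent to any other factor of slope `α` of the same length. -/
def IsSingular (α : ℝ) (k : ℕ) (s : List Bool) : Prop :=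
  IsFactor α s ∧ s.length = qd α k ∧
  ∀ u : List Bool, IsFactor α u → u.length = qd α k → u ≠ s → ¬ AbEq u s

/-- `v` occurs in `u` at position `i`. -/
def OccursAt (v u : List Bool) (i : ℕ) : Prop :=
  i + v.length ≤ u.length ∧ (u.drop i).take v.length = v

/-- `u` is a complete first return to `v`: `v` is a prefix and a suffix of `u` and `v` has exactly
two occurrences in `u`. -/
def CompleteFirstReturn (v u : List Bool) : Prop :=
  v <+: u ∧ v <:+ u ∧ {i | OccursAt v u i}.ncard = 2

/-- `u` is a complete first return to `v` in the same phase. -/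
def CFRSamePhase (v u : List Bool) : Prop :=
  v <+: u ∧ v <:+ u ∧ u.length % v.length = 0 ∧
  2 ≤ {i | OccursAt v u i}.ncard ∧
  ∀ i : ℕ, OccursAt v u i → i % v.length = 0 → i = 0 ∨ i = u.length - v.length

/-!
Write `n = q_k` and call the number of `1`s in a word its weight. Every factor `u` of slope `α`
satisfies `|weight u - |u| α| < 1`, and for `k ≥ 1` the convergents give `|n α - p_k| < α`.
Hence the factors of length `n` read off at the intercepts `1/2` and `1 - α` both have weight
`p_k`; they differ in their first letter, so the singular factor `s` does not have weight `p_k`.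
As at most two integers lie within `1` of `n α`, every other factor of length `n` has weight
`p_k`, and every shorter factor can be padded to length `n` and weight `p_k`. If the occurrences
of `s` in `w` missed a residue class `r` modulo `n`, cutting `w` at the positions `≡ r` and
padding both ends would make `w` a factor of an abelian power of period `n`. So the occurrences
of `s` meet all `n` residue classes. (For `k = 0` the same argument runs with `p` the weight of
the letter other than `s`.)
-/

section ContinuedFraction

variable {α : ℝ}

lemma irrational_cq (hirr : Irrational α) : ∀ t, Irrational (cq α t)
  | 0 => hirr
  | t + 1 => by
    simpa [cq] using ((irrational_cq hirr t).sub_intCast ⌊cq α t⌋).inv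

lemma one_lt_cq_succ (hirr : Irrational α) (t : ℕ) : 1 < cq α (t + 1) := by
  have hpos : 0 < Int.fract (cq α t) := Int.fract_pos.2 ((irrational_cq hirr t).ne_int _)
  exact one_lt_inv₀ hpos |>.2 (Int.fract_lt_one _)

lemma pq_succ_cast (hirr : Irrational α) (t : ℕ) : (pq α (t + 1) : ℝ) = ⌊cq α (t + 1)⌋ := by
  have : 0 ≤ ⌊cq α (t + 1)⌋ := Int.floor_nonneg.2 (zero_lt_one.trans (one_lt_cq_succ hirr t)).le
  rw [pq, ← Int.cast_natCast, Int.toNat_of_nonneg this]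

lemma cq_succ_succ (hirr : Irrational α) (t : ℕ) :
    cq α (t + 2) = (cq α (t + 1) - pq α (t + 1))⁻¹ := by
  rw [pq_succ_cast hirr]; rfl

lemma cq_succ_sub_pq_ne_zero (hirr : Irrational α) (t : ℕ) : cq α (t + 1) - pq α (t + 1) ≠ 0 := by
  rw [pq_succ_cast hirr]
  exact ((irrational_cq hirr (t + 1)).sub_intCast _).ne_zero

lemma cq_one (h0 : 0 < α) (h1 : α < 1) : cq α 1 = α⁻¹ := by
  simp [cq, Int.floor_eq_zero_iff.2 ⟨h0.le, h1⟩]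

lemma qd_pos (h0 : 0 < α) (h1 : α < 1) : ∀ k, 1 ≤ qd α k
  | 0 => le_rfl
  | 1 => by
    have : (1 : ℤ) ≤ ⌊cq α 1⌋ := by
      rw [Int.le_floor, cq_one h0 h1]; exact_mod_cast (one_lt_inv₀ h0 |>.2 h1).le
    simp only [qd, pq]; omega
  | k + 2 => (qd_pos h0 h1 k).trans (Nat.le_add_left _ _)

/-- Numerators of the convergents: `pn α k = p_k`. -/
def pn (α : ℝ) : ℕ → ℕ
  | 0 => 0
  | 1 => 1
  | (k + 2) => pq α (k + 2) * pn α (k + 1) + pn α k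

/-- `En α k = |q_k α - p_k|`: the sign of `q_k α - p_k` is `(-1)^k`. -/
def En (α : ℝ) (k : ℕ) : ℝ := (-1) ^ k * ((qd α k : ℝ) * α - pn α k)

lemma En_add_two (k : ℕ) : En α (k + 2) = En α k - pq α (k + 2) * En α (k + 1) := by
  simp only [En, qd, pn]; push_cast; ring

lemma En_succ_mul_cq (hirr : Irrational α) (h0 : 0 < α) (h1 : α < 1) :
    ∀ k, En α (k + 1) * cq α (k + 2) = En α k
  | 0 => by
    have hne := cq_succ_sub_pq_ne_zero hirr 0
    rw [cq_succ_succ hirr, ← div_eq_mul_inv, div_eq_iff hne]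
    simp only [En, qd, pn, cq_one h0 h1] at hne ⊢
    field_simp
    ring
  | k + 1 => by
    have hne := cq_succ_sub_pq_ne_zero hirr (k + 1)
    rw [cq_succ_succ hirr, ← div_eq_mul_inv, div_eq_iff hne, En_add_two,
      ← En_succ_mul_cq hirr h0 h1 k]
    ring

lemma En_pos (hirr : Irrational α) (h0 : 0 < α) (h1 : α < 1) : ∀ k, 0 < En α k
  | 0 => by simpa [En, qd, pn] using h0
  | k + 1 => by
    have := En_succ_mul_cq hirr h0 h1 k
    have := En_pos hirr h0 h1 k
    have := one_lt_cq_succ hirr (k + 1)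
    nlinarith

lemma strictAnti_En (hirr : Irrational α) (h0 : 0 < α) (h1 : α < 1) : StrictAnti (En α) :=
  strictAnti_nat_of_succ_lt fun k => by
    have := En_succ_mul_cq hirr h0 h1 k
    have := En_pos hirr h0 h1 (k + 1)
    have := one_lt_cq_succ hirr (k + 1)
    nlinarith

theorem exists_abs_qd_mul_sub_lt (hirr : Irrational α) (h0 : 0 < α) (h1 : α < 1) {k : ℕ}
    (hk : 1 ≤ k) : ∃ p : ℕ, |(qd α k : ℝ) * α - p| < α := by
  refine ⟨pn α k, ?_⟩
  have hE : (qd α k : ℝ) * α - pn α k = (-1) ^ k * En α k := by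
    rw [En, ← mul_assoc, ← mul_pow]; norm_num
  rw [hE, abs_mul, abs_pow, abs_neg, abs_one, one_pow, one_mul, abs_of_pos (En_pos hirr h0 h1 k)]
  simpa [En, qd, pn] using strictAnti_En hirr h0 h1 hk

end ContinuedFraction

section Balance

variable {α : ℝ}

lemma count_map_range_eq_sub {S : ℕ → Bool} {G : ℕ → ℤ}
    (hG : ∀ m, ((S m).toNat : ℤ) = G (m + 1) - G m) :
    ∀ l, (((List.range l).map S).count true : ℤ) = G l - G 0
  | 0 => by simp
  | l + 1 => by
    have := hG l
    rw [List.range_succ, List.map_append, List.count_append, Nat.cast_add,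
      count_map_range_eq_sub hG l]
    cases h : S l <;> simp [h] at this ⊢ <;> omega

lemma lowerWord_toNat (h0 : 0 ≤ α) (h1 : α < 1) (ρ : ℝ) (m : ℕ) :
    ((lowerWord α ρ m).toNat : ℤ) = ⌊ρ + (m + 1 : ℕ) * α⌋ - ⌊ρ + m * α⌋ := by
  set y := ρ + m * α
  have hstep : ⌊y + α⌋ = ⌊y⌋ + (lowerWord α ρ m).toNat := by
    have := Int.floor_add_fract y
    have := Int.fract_nonneg y
    have := Int.fract_lt_one y
    rw [Int.floor_eq_iff]
    unfold lowerWord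
    split_ifs <;> simp only [Bool.toNat_true, Bool.toNat_false] <;> push_cast <;>
      constructor <;> linarith
  rw [show ρ + (m + 1 : ℕ) * α = y + α by push_cast; ring, hstep]
  ring

lemma upperWord_toNat (h0 : 0 ≤ α) (h1 : α < 1) (ρ : ℝ) (m : ℕ) :
    ((upperWord α ρ m).toNat : ℤ) = ⌈ρ + (m + 1 : ℕ) * α⌉ - ⌈ρ + m * α⌉ := by
  set z := -(ρ + m * α)
  have hstep : ⌊z - α⌋ = ⌊z⌋ - (upperWord α ρ m).toNat := by
    have := Int.floor_add_fract z
    have := Int.fract_nonneg z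
    have := Int.fract_lt_one z
    rw [Int.floor_eq_iff]
    unfold upperWord fract'
    split_ifs <;> simp only [Bool.toNat_true, Bool.toNat_false] <;> push_cast <;>
      constructor <;> linarith
  have hceil (a : ℝ) : ⌈a⌉ = -⌊-a⌋ := by rw [Int.floor_neg, neg_neg]
  rw [hceil, hceil, show -(ρ + (m + 1 : ℕ) * α) = z - α by push_cast; ring, hstep]
  ring

lemma abs_floor_sub_floor_sub_lt (x y : ℝ) : |((⌊y⌋ - ⌊x⌋ : ℤ) : ℝ) - (y - x)| < 1 := by
  rw [abs_sub_lt_iff]; push_cast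
  constructor <;> linarith [Int.floor_le x, Int.floor_le y, Int.lt_floor_add_one x,
    Int.lt_floor_add_one y]

lemma abs_ceil_sub_ceil_sub_lt (x y : ℝ) : |((⌈y⌉ - ⌈x⌉ : ℤ) : ℝ) - (y - x)| < 1 := by
  rw [abs_sub_lt_iff]; push_cast
  constructor <;> linarith [Int.le_ceil x, Int.le_ceil y, Int.ceil_lt_add_one x,
    Int.ceil_lt_add_one y]

theorem IsFactor.abs_count_sub_lt (h0 : 0 ≤ α) (h1 : α < 1) {w : List Bool}
    (hw : IsFactor α w) : |(w.count true : ℝ) - w.length * α| < 1 := by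
  obtain ⟨S, ⟨ρ, -, -, hS⟩, i, hwi⟩ := hw
  set l := w.length
  have hx : ρ + (i + l : ℕ) * α - (ρ + i * α) = l * α := by push_cast; ring
  rcases hS with rfl | rfl
  · have hc := count_map_range_eq_sub (G := fun j => ⌊ρ + (i + j : ℕ) * α⌋)
      (fun m => lowerWord_toNat h0 h1 ρ (i + m)) l
    rw [← hwi, Nat.add_zero] at hc
    rw [show (w.count true : ℝ) = ((w.count true : ℤ) : ℝ) by simp, hc, ← hx]
    exact abs_floor_sub_floor_sub_lt _ _
  · have hc := count_map_range_eq_sub (G := fun j => ⌈ρ + (i + j : ℕ) * α⌉)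
      (fun m => upperWord_toNat h0 h1 ρ (i + m)) l
    rw [← hwi, Nat.add_zero] at hc
    rw [show (w.count true : ℝ) = ((w.count true : ℤ) : ℝ) by simp, hc, ← hx]
    exact abs_ceil_sub_ceil_sub_lt _ _

theorem IsFactor.infix {w u : List Bool} (hw : IsFactor α w) (hu : u <:+: w) : IsFactor α u := by
  obtain ⟨S, hS, i, hwi⟩ := hw
  obtain ⟨a, b, rfl⟩ := hu
  refine ⟨S, hS, i + a.length, List.ext_getElem (by simp) fun j hj _ => ?_⟩
  have := List.getElem_of_eq hwi (i := a.length + j) (by simp; omega)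
  simp only [List.append_assoc, List.getElem_append_right (Nat.le_add_right _ _),
    Nat.add_sub_cancel_left, List.getElem_append_left hj] at this
  simpa [Nat.add_assoc] using this

lemma isFactor_map_range_lowerWord {ρ : ℝ} (hρ0 : 0 ≤ ρ) (hρ1 : ρ < 1) (n : ℕ) :
    IsFactor α ((List.range n).map (lowerWord α ρ)) :=
  ⟨lowerWord α ρ, ⟨ρ, hρ0, hρ1, Or.inl rfl⟩, 0, by simp⟩

lemma count_map_range_lowerWord (h0 : 0 ≤ α) (h1 : α < 1) (ρ : ℝ) (n : ℕ) :
    (((List.range n).map (lowerWord α ρ)).count true : ℤ) = ⌊ρ + n * α⌋ - ⌊ρ⌋ := by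
  simpa using count_map_range_eq_sub (G := fun j => ⌊ρ + j * α⌋) (lowerWord_toNat h0 h1 ρ) n

end Balance

def Paddable (n p : ℕ) (u : List Bool) : Prop :=
  ∃ v : List Bool, u.length + v.length = n ∧ u.count true + v.count true = p

lemma isAbelianPower_flatten {n c : ℕ} (hn : 1 ≤ n) {bs : List (List Bool)} (hbs : 2 ≤ bs.length)
    (hlen : ∀ b ∈ bs, b.length = n) (hcount : ∀ b ∈ bs, b.count true = c) :
    IsAbelianPower n bs.length bs.flatten := by
  have hmap : bs.map List.length = List.replicate bs.length n :=
    List.eq_replicate_iff.2 ⟨by simp, by simpa using hlen⟩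
  have hblock (i : ℕ) (hi : i < bs.length) : (bs.flatten.drop (i * n)).take n = bs[i] := by
    have hsum : ((bs.map List.length).take i).sum = i * n := by
      simp [hmap, List.take_replicate, Nat.min_eq_left hi.le]
    rw [← hsum, List.drop_sum_flatten, List.drop_eq_getElem_cons hi, List.flatten_cons,
      List.take_left' (hlen _ (List.getElem_mem hi))]
  refine ⟨hn, hbs, by simp [hmap], fun i hi j hj => ?_⟩
  rw [hblock i hi, hblock j hj]
  exact ⟨by rw [hlen _ (List.getElem_mem hi), hlen _ (List.getElem_mem hj)],
    by rw [hcount _ (List.getElem_mem hi), hcount _ (List.getElem_mem hj)]⟩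

theorem hasAbPeriod_append_flatten_append {n p : ℕ} (hn : 1 ≤ n) {head tail : List Bool}
    {mids : List (List Bool)} (hhead : Paddable n p head) (htail : Paddable n p tail)
    (hmids : ∀ b ∈ mids, b.length = n ∧ b.count true = p) :
    HasAbPeriod (head ++ mids.flatten ++ tail) n := by
  obtain ⟨vh, hvh_len, hvh_count⟩ := hhead
  obtain ⟨vt, hvt_len, hvt_count⟩ := htail
  -- the padded first block is repeated so that there are at least two blocks
  set bs := (vh ++ head) :: (vh ++ head) :: (mids ++ [tail ++ vt])
  have hbs (b) (hb : b ∈ bs) : b.length = n ∧ b.count true = p := by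
    simp only [bs, List.mem_cons, List.mem_append, List.not_mem_nil, or_false] at hb
    rcases hb with rfl | rfl | hb | rfl
    · simp only [List.length_append, List.count_append]; omega
    · simp only [List.length_append, List.count_append]; omega
    · exact hmids b hb
    · simp only [List.length_append, List.count_append]; omega
  refine ⟨_, _, isAbelianPower_flatten hn (by simp [bs]) (fun b hb => (hbs b hb).1)
    (fun b hb => (hbs b hb).2), ⟨vh ++ head ++ vh, vt, ?_⟩⟩
  simp [bs]

lemma flatten_map_range_take_drop (x : List Bool) (n : ℕ) :
    ∀ M, ((List.range M).map fun m => (x.drop (m * n)).take n).flatten = x.take (M * n)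
  | 0 => by simp
  | M + 1 => by
    rw [List.range_succ, List.map_append, List.flatten_append,
      flatten_map_range_take_drop x n M, Nat.succ_mul, List.take_add]
    simp

theorem hasAbPeriod_of_phase {w : List Bool} {n p r : ℕ} (hn : 1 ≤ n) (hr : r < n)
    (hshort : ∀ u, u <:+: w → u.length < n → Paddable n p u)
    (hblock : ∀ i, i + n ≤ w.length → i % n = r → ((w.drop i).take n).count true = p) :
    HasAbPeriod w n := by
  set x := w.drop r
  set M := x.length / n
  have hM : M * n + x.length % n = x.length := Nat.div_add_mod' _ _
  have hw : w = w.take r ++ ((List.range M).map fun m => (x.drop (m * n)).take n).flatten ++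
      x.drop (M * n) := by
    rw [flatten_map_range_take_drop, List.append_assoc, List.take_append_drop,
      List.take_append_drop]
  rw [hw]
  refine hasAbPeriod_append_flatten_append hn
    (hshort _ (List.take_prefix r w).isInfix (by simp; omega))
    (hshort _ ((List.drop_suffix _ x).isInfix.trans (List.drop_suffix r w).isInfix)
      (by simp only [List.length_drop]; have := Nat.mod_lt x.length hn; omega))
    fun b hb => ?_
  obtain ⟨m, hm, rfl⟩ := List.mem_map.1 hb
  have hm : (m + 1) * n ≤ M * n := Nat.mul_le_mul_right _ (List.mem_range.1 hm)
  have hlen : r + m * n + n ≤ w.length := by simp [x] at hM; rw [Nat.succ_mul] at hm; omega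
  rw [List.drop_drop]
  refine ⟨by simp; omega, hblock _ hlen ?_⟩
  rw [Nat.add_mul_mod_self_right, Nat.mod_eq_of_lt hr]

lemma le_ncard_of_forall_exists_mod {S : Set ℕ} (hS : S.Finite) {n : ℕ}
    (h : ∀ r < n, ∃ i ∈ S, i % n = r) : n ≤ S.ncard :=
  calc n = (Set.Iio n).ncard := by simp
    _ ≤ ((· % n) '' S).ncard :=
      Set.ncard_le_ncard (fun r hr => (h r hr).imp fun _ hi => hi) (hS.image _)
    _ ≤ S.ncard := Set.ncard_image_le hS

theorem le_ncard_occursAt {s w : List Bool} {n p : ℕ} (hn : 1 ≤ n) (hs : s.length = n)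
    (hfull : ∀ u, u <:+: w → u.length = n → u ≠ s → u.count true = p)
    (hshort : ∀ u, u <:+: w → u.length < n → Paddable n p u)
    (hnp : ¬ HasAbPeriod w n) : n ≤ {i | OccursAt s w i}.ncard := by
  refine le_ncard_of_forall_exists_mod ((Set.finite_Iic w.length).subset fun i hi => ?_)
    fun r hr => ?_
  · exact Set.mem_Iic.2 (le_trans (Nat.le_add_right _ _) hi.1)
  by_contra hnone
  refine hnp (hasAbPeriod_of_phase hn hr hshort fun i hi hir => hfull _ ?_ (by simp; omega) ?_)
  · exact ((List.take_prefix _ _).isInfix.trans (List.drop_suffix _ _).isInfix)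
  · exact fun heq => hnone ⟨i, ⟨by omega, by rw [hs, heq]⟩, hir⟩

lemma eq_of_abs_sub_lt_one_of_ne_of_ne {a b c : ℕ} {t : ℝ} (ha : |a - t| < 1)
    (hb : |b - t| < 1) (hc : |c - t| < 1) (hac : a ≠ c) (hbc : b ≠ c) : a = b := by
  have key {x y : ℕ} (hx : |x - t| < 1) (hy : |y - t| < 1) : x ≤ y + 1 := by
    have : (x : ℝ) < y + 1 + 1 := by linarith [abs_lt.1 hx, abs_lt.1 hy]
    exact Nat.lt_add_one_iff.1 (by exact_mod_cast this)
  have := key ha hb; have := key hb ha; have := key ha hc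
  have := key hc ha; have := key hb hc; have := key hc hb
  omega

def IsGenericWeight (α : ℝ) (n p : ℕ) (s : List Bool) : Prop :=
  (∀ u, IsFactor α u → u.length = n → u ≠ s → u.count true = p) ∧
  ∀ u, IsFactor α u → u.length < n → Paddable n p u

lemma isGenericWeight_of_length_eq_one {α : ℝ} {s : List Bool} (hs : s.length = 1) :
    ∃ p, IsGenericWeight α 1 p s := by
  obtain ⟨b, rfl⟩ := List.length_eq_one_iff.1 hs
  refine ⟨[!b].count true, fun u _ hu hne => ?_, fun u _ hu => ⟨[!b], ?_⟩⟩
  · obtain ⟨c, rfl⟩ := List.length_eq_one_iff.1 hu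
    cases b <;> cases c <;> simp_all
  · simp [List.length_eq_zero_iff.1 (Nat.lt_one_iff.1 hu)]

section Singular

variable {α : ℝ}

theorem IsFactor.paddable (h0 : 0 < α) (h2 : α < 1 / 2) {n p : ℕ}
    (hp : |(n : ℝ) * α - p| < α) {u : List Bool} (hu : IsFactor α u) (hlen : u.length < n) :
    Paddable n p u := by
  have hc := abs_lt.1 (hu.abs_count_sub_lt h0.le (by linarith))
  have hp' := abs_lt.1 hp
  have hl : (u.length : ℝ) + 1 ≤ n := by exact_mod_cast hlen
  have hle : u.count true ≤ p := by
    have : (u.count true : ℝ) < p + 1 := by nlinarith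
    exact_mod_cast Nat.lt_add_one_iff.1 (by exact_mod_cast this)
  have hge : p ≤ u.count true + (n - u.length) := by
    have : (p : ℝ) < u.count true + (n - u.length) + 1 := by nlinarith
    rw [← Nat.cast_sub hlen.le] at this
    exact Nat.lt_add_one_iff.1 (by exact_mod_cast this)
  exact ⟨.replicate (p - u.count true) true ++ .replicate (n - u.length - (p - u.count true)) false,
    by simp; omega, by simp [List.count_replicate]; omega⟩

lemma IsSingular.count_ne (h0 : 0 < α) (h2 : α < 1 / 2) {k p : ℕ} {s : List Bool}
    (hs : IsSingular α k s) (hn : 1 ≤ qd α k) (hp : |(qd α k : ℝ) * α - p| < α) :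
    s.count true ≠ p := by
  obtain ⟨-, hslen, huniq⟩ := hs
  set n := qd α k
  have h1 : α < 1 := by linarith
  have hp' := abs_lt.1 hp
  have hweight {ρ : ℝ} (hρ : ⌊ρ⌋ = 0) (hρp : ⌊ρ + n * α⌋ = p) :
      ((List.range n).map (lowerWord α ρ)).count true = p := by
    have := count_map_range_lowerWord h0.le h1 ρ n
    rw [hρ, hρp, sub_zero] at this
    exact_mod_cast this
  set a := (List.range n).map (lowerWord α (1 / 2))
  set b := (List.range n).map (lowerWord α (1 - α))
  have ha : a.count true = p := hweight (by norm_num [Int.floor_eq_iff])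
    (Int.floor_eq_iff.2 ⟨by push_cast; linarith, by push_cast; linarith⟩)
  have hb : b.count true = p := hweight (Int.floor_eq_zero_iff.2 ⟨by linarith, by linarith⟩)
    (Int.floor_eq_iff.2 ⟨by push_cast; linarith, by push_cast; linarith⟩)
  have hab : a ≠ b := fun h => by
    have := congrArg (·[0]?) h
    simp only [a, b, List.getElem?_map, List.getElem?_range (by omega : 0 < n), Option.map_some,
      lowerWord, CharP.cast_eq_zero, zero_mul, add_zero, tsub_le_iff_right, Bool.if_false_right,
      Bool.and_true, Option.some.injEq, decide_eq_decide] at this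
    rw [Int.fract_eq_self.2 ⟨by norm_num, by norm_num⟩,
      Int.fract_eq_self.2 ⟨by linarith, by linarith⟩] at this
    linarith [this.2 (by linarith)]
  intro hsp
  have hsing (u) (hu : IsFactor α u) (hlen : u.length = n) (hcount : u.count true = p) : u = s :=
    by_contra fun hne => huniq u hu hlen hne ⟨hlen.trans hslen.symm, hcount.trans hsp.symm⟩
  refine hab ((hsing a ?_ (by simp [a]) ha).trans (hsing b ?_ (by simp [b]) hb).symm)
  · exact isFactor_map_range_lowerWord (by norm_num) (by norm_num) n
  · exact isFactor_map_range_lowerWord (by linarith) (by linarith) n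

theorem IsSingular.isGenericWeight (hirr : Irrational α) (h0 : 0 < α) (h2 : α < 1 / 2)
    {k : ℕ} (hk : 1 ≤ k) {s : List Bool} (hs : IsSingular α k s) :
    ∃ p, IsGenericWeight α (qd α k) p s := by
  have h1 : α < 1 := by linarith
  obtain ⟨p, hp⟩ := exists_abs_qd_mul_sub_lt hirr h0 h1 hk
  have hsp := hs.count_ne h0 h2 (qd_pos h0 h1 k) hp
  refine ⟨p, fun u hu hlen hne => ?_, fun u hu hlen => hu.paddable h0 h2 hp hlen⟩
  have hbal {u : List Bool} (hu : IsFactor α u) := hu.abs_count_sub_lt h0.le h1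
  refine eq_of_abs_sub_lt_one_of_ne_of_ne (t := qd α k * α) (by simpa [hlen] using hbal hu) ?_
    (by simpa [hs.2.1] using hbal hs.1) ?_ hsp.symm
  · rw [abs_sub_comm]; exact hp.trans h1
  · exact fun h => hs.2.2 u hu hlen hne ⟨hlen.trans hs.2.1.symm, h⟩

end Singular

theorem many_singular_occurrences
    (α : ℝ) (hirr : Irrational α) (h0 : 0 < α) (h2 : α < 1 / 2)
    (k : ℕ) (s : List Bool) (hs : IsSingular α k s)
    (w : List Bool) (hw : IsFactor α w) (hnp : ¬ HasAbPeriod w (qd α k)) :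
    qd α k ≤ {i : ℕ | OccursAt s w i}.ncard := by
  obtain ⟨p, hfull, hshort⟩ : ∃ p, IsGenericWeight α (qd α k) p s := by
    rcases Nat.eq_zero_or_pos k with rfl | hk
    · exact isGenericWeight_of_length_eq_one hs.2.1
    · exact hs.isGenericWeight hirr h0 h2 hk
  exact le_ncard_occursAt (qd_pos h0 (by linarith) k) hs.2.1
    (fun u hu => hfull u (hw.infix hu)) (fun u hu => hshort u (hw.infix hu)) hnp

end SturmianAbelian
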